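/- Let X be a real Banach space with dim X ≥ 2, p > 1, F(x) = (1/p)‖x‖^p, j_p : X → X* a selection of the duality mapping, and let φ : [0,∞) → [0,∞) be nondecreasing with φ(τ) > 0 for τ > 0. Suppose (a): there exist C, c > 0 such that for all x ≠ 0 and all y ∈ X with ‖x−y‖ ≤ c‖x‖ one has Δ_F^{j_p(x)}(y,x) ≤ C‖x‖^p φ(‖x−y‖/‖x‖). Then (b): there exists C' > 0 such that for all x ≠ 0 and all y ∈ X, Δ^sym(x,y) ≤ C'·max{‖x‖,‖y‖}^p · φ(2‖x−y‖/max{‖x‖,‖y‖}); and consequently (c): there exists C'' > 0 such that for all x ≠ 0 and all y ∈ X, Δ_F^{j_p(x)}(y,x) ≤ C''·max{‖x‖,‖y‖}^p · φ(2‖x−y‖/max{‖x‖,‖y‖}). -/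

import Mathlib

open scoped ENNReal

/-- The modulus of smoothness of a normed space `Y`:
`ρ_Y(τ) = sup {(‖x+τy‖+‖x−τy‖)/2 − 1 : x, y ∈ S_Y}`. -/
noncomputable def rhoSpace (Y : Type*) [NormedAddCommGroup Y] [NormedSpace ℝ Y] (τ : ℝ) : ℝ :=
  sSup {r : ℝ | ∃ x y : Y, ‖x‖ = 1 ∧ ‖y‖ = 1 ∧ r = (‖x + τ • y‖ + ‖x - τ • y‖) / 2 - 1}

/-- The modulus of convexity of a normed space `Y`:
`δ_Y(ε) = inf {1 − ‖y+ỹ‖/2 : y, ỹ ∈ S_Y, ‖y−ỹ‖ = ε}`. -/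
noncomputable def deltaSpace (Y : Type*) [NormedAddCommGroup Y] [NormedSpace ℝ Y] (ε : ℝ) : ℝ :=
  sInf {r : ℝ | ∃ y z : Y, ‖y‖ = 1 ∧ ‖z‖ = 1 ∧ ‖y - z‖ = ε ∧ r = 1 - ‖y + z‖ / 2}

/-- `φ` is a subgradient of `F` at `x`: `F(y) ≥ F(x) + ⟨φ, y−x⟩` for all `y`. -/
def IsSubgradient {X : Type*} [NormedAddCommGroup X] [NormedSpace ℝ X]
    (F : X → ℝ) (x : X) (φ : X →L[ℝ] ℝ) : Prop :=
  ∀ y : X, F x + φ (y - x) ≤ F y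

/-- The linearization error (Bregman divergence)
`Δ_F^{φ}(y,x) = F(y) − F(x) − ⟨φ, y−x⟩`. -/
def breg {X : Type*} [NormedAddCommGroup X] [NormedSpace ℝ X]
    (F : X → ℝ) (φ : X →L[ℝ] ℝ) (y x : X) : ℝ :=
  F y - F x - φ (y - x)

/-- The modulus of smoothness of `F` at `x` w.r.t. `φ`, with values in `[0,∞]`:
`ρ_{F,x}^{φ}(τ) = sup {|Δ_F^{φ}(y,x)| : ‖y−x‖ = τ}`. -/
noncomputable def rhoF {X : Type*} [NormedAddCommGroup X] [NormedSpace ℝ X]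
    (F : X → ℝ) (x : X) (φ : X →L[ℝ] ℝ) (τ : ℝ) : ℝ≥0∞ :=
  ⨆ y ∈ {y : X | ‖y - x‖ = τ}, ENNReal.ofReal |breg F φ y x|

/-- The modulus of convexity of `F` at `x` w.r.t. `φ`, with values in `[0,∞]`:
`δ_{F,x}^{φ}(τ) = inf {|Δ_F^{φ}(y,x)| : ‖y−x‖ = τ}`. -/
noncomputable def deltaF {X : Type*} [NormedAddCommGroup X] [NormedSpace ℝ X]
    (F : X → ℝ) (x : X) (φ : X →L[ℝ] ℝ) (τ : ℝ) : ℝ≥0∞ :=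
  ⨅ y ∈ {y : X | ‖y - x‖ = τ}, ENNReal.ofReal |breg F φ y x|

/-- `jp` is a selection of the duality mapping with exponent `p`:
`⟨j_p(x), x⟩ = ‖j_p(x)‖·‖x‖` and `‖j_p(x)‖ = ‖x‖^{p−1}` for every `x`. -/
def IsDualitySelection {X : Type*} [NormedAddCommGroup X] [NormedSpace ℝ X]
    (p : ℝ) (jp : X → X →L[ℝ] ℝ) : Prop :=
  ∀ x : X, jp x x = ‖jp x‖ * ‖x‖ ∧ ‖jp x‖ = ‖x‖ ^ (p - 1)

/-!
Write `M = max ‖x‖ ‖y‖`. If `‖x - y‖` is a small fraction of `M`, then both `‖x‖` and `‖y‖` are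
at least `M / 2`, so the local estimate (a) applies at `x` and at `y` and bounds each half of the
symmetric divergence by `C M^p φ(2‖x - y‖ / M)`. Otherwise `φ(2‖x - y‖ / M)` is bounded below
by a positive constant, while the symmetric divergence `⟨j_p x - j_p y, x - y⟩` is at most
`4 M^p` because `‖j_p x‖ ≤ M^(p-1)` and `‖x - y‖ ≤ 2M`. Finally (c) follows from (b): since
`j_p y` is a subgradient of `F` at `y` (Young's inequality), `Δ_F^{j_p y}(x, y) ≥ 0`.
-/

open Set

lemma Real.rpow_sub_one_mul_self {p a : ℝ} (hp : 1 < p) (ha : 0 ≤ a) :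
    a ^ (p - 1) * a = a ^ p := by
  rw [← Real.rpow_add_one' ha (by linarith), sub_add_cancel]

lemma Real.rpow_sub_one_mul_le {p a b : ℝ} (hp : 1 < p) (ha : 0 ≤ a) (hb : 0 ≤ b) :
    a ^ (p - 1) * b ≤ (1 - 1 / p) * a ^ p + 1 / p * b ^ p := by
  have hq : (p / (p - 1)).HolderConjugate p := (Real.HolderConjugate.conjExponent hp).symm
  have h := Real.young_inequality_of_nonneg (Real.rpow_nonneg ha (p - 1)) hb hq
  rw [← Real.rpow_mul ha, mul_div_cancel₀ p (by linarith)] at h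
  convert h using 2 <;> field_simp

lemma norm_max_le_two_mul_norm_left {E : Type*} [SeminormedAddCommGroup E] {x y : E}
    (h : ‖x - y‖ ≤ max ‖x‖ ‖y‖ / 2) : max ‖x‖ ‖y‖ ≤ 2 * ‖x‖ := by
  have := norm_le_norm_add_norm_sub' y x
  rw [norm_sub_rev] at this
  rcases max_cases ‖x‖ ‖y‖ with ⟨hM, -⟩ | ⟨hM, -⟩ <;> rw [hM] at h ⊢ <;>
    linarith [norm_nonneg x]

lemma breg_nonneg_of_isSubgradient {X : Type*} [NormedAddCommGroup X] [NormedSpace ℝ X]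
    {F : X → ℝ} {x : X} {g : X →L[ℝ] ℝ} (hg : IsSubgradient F x g) (y : X) :
    0 ≤ breg F g y x := by
  unfold breg
  linarith [hg y]

lemma breg_add_breg_swap {X : Type*} [NormedAddCommGroup X] [NormedSpace ℝ X]
    (F : X → ℝ) (g h : X →L[ℝ] ℝ) (x y : X) :
    breg F g y x + breg F h x y = g (x - y) + h (y - x) := by
  simp only [breg, map_sub]
  ring

namespace IsDualitySelection

variable {X : Type*} [NormedAddCommGroup X] [NormedSpace ℝ X] {p : ℝ} {jp : X → X →L[ℝ] ℝ}

lemma apply_le (hjp : IsDualitySelection p jp) (x y : X) : jp x y ≤ ‖x‖ ^ (p - 1) * ‖y‖ :=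
  calc jp x y ≤ ‖jp x y‖ := le_abs_self _
    _ ≤ ‖jp x‖ * ‖y‖ := (jp x).le_opNorm y
    _ = ‖x‖ ^ (p - 1) * ‖y‖ := by rw [(hjp x).2]

lemma apply_self (hjp : IsDualitySelection p jp) (hp : 1 < p) (x : X) : jp x x = ‖x‖ ^ p := by
  rw [(hjp x).1, (hjp x).2, Real.rpow_sub_one_mul_self hp (norm_nonneg x)]

lemma isSubgradient (hjp : IsDualitySelection p jp) (hp : 1 < p) (x : X) :
    IsSubgradient (fun z : X => 1 / p * ‖z‖ ^ p) x (jp x) := by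
  intro y
  have hyoung := Real.rpow_sub_one_mul_le hp (norm_nonneg x) (norm_nonneg y)
  rw [map_sub, hjp.apply_self hp]
  linarith [hjp.apply_le x y]

lemma breg_add_breg_swap_le (hjp : IsDualitySelection p jp) (hp : 1 < p) (x y : X) :
    breg (fun z : X => 1 / p * ‖z‖ ^ p) (jp x) y x +
        breg (fun z : X => 1 / p * ‖z‖ ^ p) (jp y) x y ≤ 4 * max ‖x‖ ‖y‖ ^ p := by
  set M := max ‖x‖ ‖y‖
  have hM : 0 ≤ M := (norm_nonneg x).trans (le_max_left _ _)
  have hpow (z : X) (hz : ‖z‖ ≤ M) : ‖z‖ ^ (p - 1) ≤ M ^ (p - 1) :=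
    Real.rpow_le_rpow (norm_nonneg z) hz (by linarith)
  have hxy : ‖x - y‖ ≤ 2 * M := by
    linarith [norm_sub_le x y, le_max_left ‖x‖ ‖y‖, le_max_right ‖x‖ ‖y‖]
  rw [breg_add_breg_swap, ← Real.rpow_sub_one_mul_self hp hM]
  have hx := hjp.apply_le x (x - y)
  have hy := hjp.apply_le y (y - x)
  rw [norm_sub_rev y] at hy
  nlinarith [hpow x (le_max_left _ _), hpow y (le_max_right _ _), norm_nonneg (x - y),
    Real.rpow_nonneg hM (p - 1)]

end IsDualitySelection

lemma le_of_local_bound {X : Type*} [NormedAddCommGroup X] {D : X → X → ℝ} {φ : ℝ → ℝ}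
    {C c p : ℝ} (hC : 0 ≤ C) (hp : 0 ≤ p)
    (hφ0 : ∀ τ : ℝ, 0 ≤ τ → 0 ≤ φ τ) (hφ : MonotoneOn φ (Ici 0))
    (hD : ∀ x y : X, x ≠ 0 → ‖x - y‖ ≤ c * ‖x‖ → D y x ≤ C * ‖x‖ ^ p * φ (‖x - y‖ / ‖x‖))
    {x y : X} (hM₀ : 0 < max ‖x‖ ‖y‖) (hxy : ‖x - y‖ ≤ min c 1 / 2 * max ‖x‖ ‖y‖) :
    D y x ≤ C * max ‖x‖ ‖y‖ ^ p * φ (2 * ‖x - y‖ / max ‖x‖ ‖y‖) := by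
  set M := max ‖x‖ ‖y‖
  have hxy₀ := norm_nonneg (x - y)
  have hmin : 0 ≤ min c 1 := by
    by_contra! h
    nlinarith
  have hMx : M ≤ 2 * ‖x‖ := norm_max_le_two_mul_norm_left <| by
    nlinarith [min_le_right c 1]
  have hx₀ : 0 < ‖x‖ := by linarith
  have hxc : ‖x - y‖ ≤ c * ‖x‖ :=
    calc ‖x - y‖ ≤ min c 1 / 2 * M := hxy
      _ ≤ min c 1 / 2 * (2 * ‖x‖) := by gcongr
      _ ≤ c * ‖x‖ := by nlinarith [min_le_left c 1]
  have hratio : ‖x - y‖ / ‖x‖ ≤ 2 * ‖x - y‖ / M := by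
    rw [div_le_div_iff₀ hx₀ hM₀]
    nlinarith
  calc D y x ≤ C * ‖x‖ ^ p * φ (‖x - y‖ / ‖x‖) := hD x y (norm_pos_iff.mp hx₀) hxc
    _ ≤ C * M ^ p * φ (2 * ‖x - y‖ / M) := by
      refine mul_le_mul ?_ (hφ (mem_Ici.2 (by positivity)) (mem_Ici.2 (by positivity)) hratio)
        (hφ0 _ (by positivity)) (by positivity)
      gcongr
      exact le_max_left _ _

lemma IsDualitySelection.breg_add_breg_swap_le_of_local_bound {X : Type*}
    [NormedAddCommGroup X] [NormedSpace ℝ X] {p : ℝ} {jp : X → X →L[ℝ] ℝ}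
    (hjp : IsDualitySelection p jp) (hp : 1 < p) {φ : ℝ → ℝ}
    (hφ0 : ∀ τ : ℝ, 0 ≤ τ → 0 ≤ φ τ) (hφ : MonotoneOn φ (Ici 0)) {C c : ℝ} (hC : 0 ≤ C)
    (hc : 0 ≤ c) (hφc : 0 < φ (min c 1))
    (ha : ∀ x y : X, x ≠ 0 → ‖x - y‖ ≤ c * ‖x‖ →
      breg (fun z : X => 1 / p * ‖z‖ ^ p) (jp x) y x ≤ C * ‖x‖ ^ p * φ (‖x - y‖ / ‖x‖))
    (x y : X) (hx : x ≠ 0) :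
    breg (fun z : X => 1 / p * ‖z‖ ^ p) (jp x) y x +
        breg (fun z : X => 1 / p * ‖z‖ ^ p) (jp y) x y ≤
      max (2 * C) (4 / φ (min c 1)) * max ‖x‖ ‖y‖ ^ p * φ (2 * ‖x - y‖ / max ‖x‖ ‖y‖) := by
  set M := max ‖x‖ ‖y‖
  set s := 2 * ‖x - y‖ / M
  have hM₀ : 0 < M := (norm_pos_iff.mpr hx).trans_le (le_max_left _ _)
  have hφs : 0 ≤ φ s := hφ0 _ (by positivity)
  rcases le_or_gt ‖x - y‖ (min c 1 / 2 * M) with hsmall | hlarge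
  · have hx' := le_of_local_bound hC (by linarith) hφ0 hφ ha hM₀ hsmall
    have hy' := le_of_local_bound hC (by linarith) hφ0 hφ ha (x := y) (y := x)
      (by rwa [max_comm]) (by rwa [max_comm, norm_sub_rev])
    rw [max_comm, norm_sub_rev] at hy'
    calc _ ≤ 2 * C * M ^ p * φ s := by linarith
      _ ≤ _ := by gcongr; exact le_max_left _ _
  · have hφle : φ (min c 1) ≤ φ s := by
      refine hφ (mem_Ici.2 (le_min hc zero_le_one)) (mem_Ici.2 (by positivity)) ?_
      rw [le_div_iff₀ hM₀]
      linarith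
    calc _ ≤ 4 * M ^ p := hjp.breg_add_breg_swap_le hp x y
      _ = 4 / φ (min c 1) * M ^ p * φ (min c 1) := by field_simp
      _ ≤ 4 / φ (min c 1) * M ^ p * φ s := by gcongr
      _ ≤ _ := by gcongr; exact le_max_right _ _

theorem stmt14_general (X : Type*) [NormedAddCommGroup X] [NormedSpace ℝ X]
    (p : ℝ) (hp : 1 < p)
    (jp : X → X →L[ℝ] ℝ) (hjp : IsDualitySelection p jp)
    (φ : ℝ → ℝ)
    (hφ0 : ∀ τ : ℝ, 0 ≤ τ → 0 ≤ φ τ)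
    (hφmono : ∀ τ₁ τ₂ : ℝ, 0 ≤ τ₁ → τ₁ ≤ τ₂ → φ τ₁ ≤ φ τ₂)
    (hφpos : ∀ τ : ℝ, 0 < τ → 0 < φ τ)
    (ha : ∃ C c : ℝ, 0 < C ∧ 0 < c ∧
      ∀ x y : X, x ≠ 0 → ‖x - y‖ ≤ c * ‖x‖ →
        breg (fun z : X => (1 / p) * ‖z‖ ^ p) (jp x) y x ≤
          C * ‖x‖ ^ p * φ (‖x - y‖ / ‖x‖)) :
    (∃ C' : ℝ, 0 < C' ∧ ∀ x y : X, x ≠ 0 →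
      breg (fun z : X => (1 / p) * ‖z‖ ^ p) (jp x) y x +
          breg (fun z : X => (1 / p) * ‖z‖ ^ p) (jp y) x y ≤
        C' * max ‖x‖ ‖y‖ ^ p * φ (2 * ‖x - y‖ / max ‖x‖ ‖y‖)) ∧
    (∃ C'' : ℝ, 0 < C'' ∧ ∀ x y : X, x ≠ 0 →
      breg (fun z : X => (1 / p) * ‖z‖ ^ p) (jp x) y x ≤
        C'' * max ‖x‖ ‖y‖ ^ p * φ (2 * ‖x - y‖ / max ‖x‖ ‖y‖)) := by
  obtain ⟨C, c, hC, hc, ha⟩ := ha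
  have hφ : MonotoneOn φ (Ici 0) := fun a ha b _ hab => hφmono a b ha hab
  have hK : 0 < max (2 * C) (4 / φ (min c 1)) := lt_max_of_lt_left (by linarith)
  have hb := hjp.breg_add_breg_swap_le_of_local_bound hp hφ0 hφ hC.le hc.le
    (hφpos _ (lt_min hc one_pos)) ha
  refine ⟨⟨_, hK, hb⟩, ⟨_, hK, fun x y hx => ?_⟩⟩
  have hnonneg := breg_nonneg_of_isSubgradient (hjp.isSubgradient hp y) x
  linarith [hb x y hx]

/-- for `F = (1/p)‖·‖^p` and a nondecreasing `φ : [0,∞) → [0,∞)` positive on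
`(0,∞)`, condition (a) implies (b) (bound on the symmetric Bregman divergence) and (c)
(uniform bound on the Bregman divergence). -/
theorem stmt14 (X : Type*) [NormedAddCommGroup X] [NormedSpace ℝ X] [CompleteSpace X]
    (hdim : 2 ≤ Module.rank ℝ X)
    (p : ℝ) (hp : 1 < p)
    (jp : X → X →L[ℝ] ℝ) (hjp : IsDualitySelection p jp)
    (φ : ℝ → ℝ)
    (hφ0 : ∀ τ : ℝ, 0 ≤ τ → 0 ≤ φ τ)
    (hφmono : ∀ τ₁ τ₂ : ℝ, 0 ≤ τ₁ → τ₁ ≤ τ₂ → φ τ₁ ≤ φ τ₂)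
    (hφpos : ∀ τ : ℝ, 0 < τ → 0 < φ τ)
    (ha : ∃ C c : ℝ, 0 < C ∧ 0 < c ∧
      ∀ x y : X, x ≠ 0 → ‖x - y‖ ≤ c * ‖x‖ →
        breg (fun z : X => (1 / p) * ‖z‖ ^ p) (jp x) y x ≤
          C * ‖x‖ ^ p * φ (‖x - y‖ / ‖x‖)) :
    (∃ C' : ℝ, 0 < C' ∧ ∀ x y : X, x ≠ 0 →
      breg (fun z : X => (1 / p) * ‖z‖ ^ p) (jp x) y x +
          breg (fun z : X => (1 / p) * ‖z‖ ^ p) (jp y) x y ≤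
        C' * max ‖x‖ ‖y‖ ^ p * φ (2 * ‖x - y‖ / max ‖x‖ ‖y‖)) ∧
    (∃ C'' : ℝ, 0 < C'' ∧ ∀ x y : X, x ≠ 0 →
      breg (fun z : X => (1 / p) * ‖z‖ ^ p) (jp x) y x ≤
        C'' * max ‖x‖ ‖y‖ ^ p * φ (2 * ‖x - y‖ / max ‖x‖ ‖y‖)) :=
  stmt14_general X p hp jp hjp φ hφ0 hφmono hφpos ha
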